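/- arXiv:2010.03025 — 4 statements merged into one kernel-verified Lean document; each statement's English description precedes it below -/
import Mathlib

section
/- Weak duality for the infinite-dimensional Eisenberg-Gale programs: if (x, u) satisfies xᵢ ∈ L^∞(Θ)₊, Σᵢ xᵢ ≤ 1 a.e., uᵢ ≤ ⟨vᵢ, xᵢ⟩ with uᵢ > 0, and (p, β) satisfies p ∈ L¹(Θ)₊, βᵢ > 0, p ≥ βᵢ vᵢ a.e. for all i, then Σᵢ Bᵢ log uᵢ ≤ ⟨p, 1⟩ − Σᵢ Bᵢ log βᵢ − C, where C = Σᵢ Bᵢ − Σᵢ Bᵢ log Bᵢ. -/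
/-! Each summand is controlled by the elementary bound `B log u - β u ≤ B log (B / β) - B`
(the concave function `u ↦ B log u - β u` peaks at `u = B / β`). Summing over buyers, it remains to
bound `∑ βᵢ uᵢ ≤ ∑ βᵢ ⟨vᵢ, xᵢ⟩ = ∫ ∑ βᵢ vᵢ xᵢ`, and pointwise `∑ βᵢ vᵢ xᵢ ≤ p ∑ xᵢ ≤ p`. -/

open MeasureTheory

theorem Real.mul_log_sub_mul_le {B β u : ℝ} (hB : 0 < B) (hβ : 0 < β) (hu : 0 < u) :
    B * Real.log u - β * u ≤ B * Real.log (B / β) - B := by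
  have hlog := Real.log_le_sub_one_of_pos (show 0 < β * u / B by positivity)
  rw [Real.log_div (by positivity) hB.ne', Real.log_mul hβ.ne' hu.ne'] at hlog
  rw [Real.log_div hB.ne' hβ.ne']
  have hscaled := mul_le_mul_of_nonneg_left hlog hB.le
  rw [show B * (β * u / B - 1) = β * u - B by field_simp] at hscaled
  linarith

theorem Finset.sum_mul_mul_le_of_sum_le_one {ι : Type*} (s : Finset ι) {β v x : ι → ℝ} {p : ℝ}
    (hp : 0 ≤ p) (hx : ∀ i ∈ s, 0 ≤ x i) (hsum : ∑ i ∈ s, x i ≤ 1)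
    (hdom : ∀ i ∈ s, β i * v i ≤ p) :
    ∑ i ∈ s, β i * (v i * x i) ≤ p :=
  calc ∑ i ∈ s, β i * (v i * x i)
      ≤ ∑ i ∈ s, p * x i := by
        refine Finset.sum_le_sum fun i hi => ?_
        rw [← mul_assoc]
        exact mul_le_mul_of_nonneg_right (hdom i hi) (hx i hi)
    _ = p * ∑ i ∈ s, x i := (Finset.mul_sum ..).symm
    _ ≤ p := mul_le_of_le_one_right hp hsum

theorem MeasureTheory.sum_mul_integral_mul_le_integral {ι Θ : Type*} [Fintype ι]
    [MeasurableSpace Θ] {μ : Measure Θ} {β : ι → ℝ} {v x : ι → Θ → ℝ} {p : Θ → ℝ}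
    (hv : ∀ i, Integrable (v i) μ) (hx : ∀ i, MemLp (x i) ⊤ μ) (hp : Integrable p μ)
    (hpnn : ∀ᵐ θ ∂μ, 0 ≤ p θ) (hxnn : ∀ i, ∀ᵐ θ ∂μ, 0 ≤ x i θ)
    (hsupply : ∀ᵐ θ ∂μ, ∑ i, x i θ ≤ 1) (hdom : ∀ i, ∀ᵐ θ ∂μ, β i * v i θ ≤ p θ) :
    ∑ i, β i * ∫ θ, v i θ * x i θ ∂μ ≤ ∫ θ, p θ ∂μ := by
  have hint : ∀ i, Integrable (fun θ => β i * (v i θ * x i θ)) μ := fun i =>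
    ((hv i).mul_of_top_left (hx i)).const_mul (β i)
  have hpointwise : ∀ᵐ θ ∂μ, ∑ i, β i * (v i θ * x i θ) ≤ p θ := by
    filter_upwards [ae_all_iff.2 hxnn, ae_all_iff.2 hdom, hsupply, hpnn]
      with θ hxθ hdomθ hsupplyθ hpθ
    exact Finset.univ.sum_mul_mul_le_of_sum_le_one hpθ (fun i _ => hxθ i) hsupplyθ
      (fun i _ => hdomθ i)
  calc ∑ i, β i * ∫ θ, v i θ * x i θ ∂μ
      = ∫ θ, ∑ i, β i * (v i θ * x i θ) ∂μ := by
        rw [integral_finsetSum _ fun i _ => hint i]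
        simp only [integral_const_mul]
    _ ≤ ∫ θ, p θ ∂μ := integral_mono_ae (integrable_finsetSum _ fun i _ => hint i) hp hpointwise

theorem stmt3_general {Θ : Type*} [MeasurableSpace Θ] (μ : Measure Θ)
    (n : ℕ) (B : Fin n → ℝ) (hB : ∀ i, 0 < B i)
    (v : Fin n → Θ → ℝ) (hvint : ∀ i, Integrable (v i) μ)
    (x : Fin n → Θ → ℝ) (hx : ∀ i, MemLp (x i) ⊤ μ)
    (hxnn : ∀ i, ∀ᵐ θ ∂μ, 0 ≤ x i θ)
    (hsupply : ∀ᵐ θ ∂μ, ∑ i, x i θ ≤ 1)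
    (u : Fin n → ℝ) (hupos : ∀ i, 0 < u i)
    (huc : ∀ i, u i ≤ ∫ θ, v i θ * x i θ ∂μ)
    (p : Θ → ℝ) (hp : Integrable p μ) (hpnn : ∀ᵐ θ ∂μ, 0 ≤ p θ)
    (β : Fin n → ℝ) (hβ : ∀ i, 0 < β i)
    (hdom : ∀ i, ∀ᵐ θ ∂μ, β i * v i θ ≤ p θ) :
    ∑ i, B i * Real.log (u i) ≤
      (∫ θ, p θ ∂μ) - (∑ i, B i * Real.log (β i)) -
        ((∑ i, B i) - ∑ i, B i * Real.log (B i)) := by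
  have hβu : ∑ i, β i * u i ≤ ∫ θ, p θ ∂μ :=
    (Finset.sum_le_sum fun i _ => mul_le_mul_of_nonneg_left (huc i) (hβ i).le).trans
      (sum_mul_integral_mul_le_integral hvint hx hp hpnn hxnn hsupply hdom)
  have hbuyer : ∀ i, B i * Real.log (u i) ≤
      β i * u i + (B i * Real.log (B i) - B i * Real.log (β i) - B i) := fun i => by
    have := Real.mul_log_sub_mul_le (hB i) (hβ i) (hupos i)
    rw [Real.log_div (hB i).ne' (hβ i).ne'] at this
    linarith
  have hsum := Finset.sum_le_sum fun i (_ : i ∈ Finset.univ) => hbuyer i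
  simp only [Finset.sum_add_distrib, Finset.sum_sub_distrib] at hsum
  linarith

theorem stmt3 {Θ : Type*} [MeasurableSpace Θ] (μ : Measure Θ) [IsFiniteMeasure μ]
    (n : ℕ) (B : Fin n → ℝ) (hB : ∀ i, 0 < B i)
    (v : Fin n → Θ → ℝ) (hvint : ∀ i, Integrable (v i) μ)
    (hvnn : ∀ i, ∀ᵐ θ ∂μ, 0 ≤ v i θ)
    (x : Fin n → Θ → ℝ) (hx : ∀ i, MemLp (x i) ⊤ μ)
    (hxnn : ∀ i, ∀ᵐ θ ∂μ, 0 ≤ x i θ)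
    (hsupply : ∀ᵐ θ ∂μ, ∑ i, x i θ ≤ 1)
    (u : Fin n → ℝ) (hupos : ∀ i, 0 < u i)
    (huc : ∀ i, u i ≤ ∫ θ, v i θ * x i θ ∂μ)
    (p : Θ → ℝ) (hp : Integrable p μ) (hpnn : ∀ᵐ θ ∂μ, 0 ≤ p θ)
    (β : Fin n → ℝ) (hβ : ∀ i, 0 < β i)
    (hdom : ∀ i, ∀ᵐ θ ∂μ, β i * v i θ ≤ p θ) :
    ∑ i, B i * Real.log (u i) ≤
      (∫ θ, p θ ∂μ) - (∑ i, B i * Real.log (β i)) -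
        ((∑ i, B i) - ∑ i, B i * Real.log (B i)) :=
  stmt3_general μ n B hB v hvint x hx hxnn hsupply u hupos huc p hp hpnn β hβ hdom
end

section
/- The dual Eisenberg-Gale objective ψ(β) = ∫_Θ (maxᵢ βᵢvᵢ) dμ − Σᵢ Bᵢ log βᵢ attains its infimum over ℝⁿ with β > 0 at a unique minimizer β* > 0. -/
/-!
`ψ` is the sum of the convex function `β ↦ ∫ maxᵢ βᵢ vᵢ` and the strictly convex function
`β ↦ -∑ᵢ Bᵢ log βᵢ`, so it has at most one minimizer on the positive orthant. A maximum dominates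
the average, so `n ψ(β) ≥ ∑ᵢ (βᵢ ∫ vᵢ - n Bᵢ log βᵢ)`; each summand blows up as `βᵢ → 0⁺` and as
`βᵢ → ∞`, hence `ψ` is coercive and attains its infimum.
-/

open MeasureTheory

/-- Pointwise maximum `θ ↦ maxᵢ βᵢ vᵢ(θ)` over a nonempty index set `Fin n`. -/
noncomputable def maxFun {Θ : Type*} (n : ℕ) (hn : 0 < n) (v : Fin n → Θ → ℝ)
    (β : Fin n → ℝ) (θ : Θ) : ℝ :=
  Finset.univ.sup' (Finset.univ_nonempty_iff.mpr (Fin.pos_iff_nonempty.mp hn))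
    (fun i => β i * v i θ)

open Filter Set Real

theorem MeasureTheory.Integrable.finset_sup' {Θ ι : Type*} [MeasurableSpace Θ] {μ : Measure Θ}
    {s : Finset ι} (hs : s.Nonempty) {f : ι → Θ → ℝ} (hf : ∀ i ∈ s, Integrable (f i) μ) :
    Integrable (fun θ => s.sup' hs (f · θ)) μ := by
  induction hs using Finset.Nonempty.cons_induction with
  | singleton a => simpa using hf a (by simp)
  | cons a s h hs ih =>
    simp only [Finset.sup'_cons hs]
    exact (hf a (by simp)).sup (ih fun i hi => hf i (by simp [hi]))

theorem ConvexOn.finset_sup' {𝕜 E β ι : Type*} [Semiring 𝕜] [PartialOrder 𝕜] [AddCommMonoid E]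
    [LinearOrder β] [AddCommMonoid β] [IsOrderedAddMonoid β] [SMul 𝕜 E] [Module 𝕜 β]
    [PosSMulMono 𝕜 β] {C : Set E} {s : Finset ι} (hs : s.Nonempty) {f : ι → E → β}
    (hC : Convex 𝕜 C) (hf : ∀ i ∈ s, ConvexOn 𝕜 C (f i)) :
    ConvexOn 𝕜 C (fun x => s.sup' hs (f · x)) := by
  refine ⟨hC, fun x hx y hy a b ha hb hab => Finset.sup'_le _ _ fun i hi => ?_⟩
  calc f i (a • x + b • y) ≤ a • f i x + b • f i y := (hf i hi).2 hx hy ha hb hab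
    _ ≤ a • s.sup' hs (f · x) + b • s.sup' hs (f · y) := by
      gcongr <;> exact Finset.le_sup' (f · _) hi

theorem StrictConvexOn.const_mul {E : Type*} [AddCommMonoid E] [Module ℝ E] {s : Set E}
    {f : E → ℝ} {c : ℝ} (hc : 0 < c) (hf : StrictConvexOn ℝ s f) :
    StrictConvexOn ℝ s (fun x => c * f x) := by
  refine ⟨hf.1, fun x hx y hy hxy a b ha hb hab => ?_⟩
  have := hf.2 hx hy hxy ha hb hab
  simp only [smul_eq_mul] at this ⊢
  nlinarith

theorem strictConvexOn_univ_pi_sum {ι 𝕜 β : Type*} [Fintype ι] {E : ι → Type*}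
    [Semiring 𝕜] [PartialOrder 𝕜] [∀ i, AddCommMonoid (E i)] [∀ i, Module 𝕜 (E i)]
    [AddCommMonoid β] [PartialOrder β] [IsOrderedCancelAddMonoid β] [Module 𝕜 β]
    {s : ∀ i, Set (E i)} {f : ∀ i, E i → β} (hf : ∀ i, StrictConvexOn 𝕜 (s i) (f i)) :
    StrictConvexOn 𝕜 (univ.pi s) (fun x => ∑ i, f i (x i)) := by
  refine ⟨convex_pi fun i _ => (hf i).1, fun x hx y hy hxy a b ha hb hab => ?_⟩
  obtain ⟨j, hj⟩ := Function.ne_iff.mp hxy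
  rw [mem_univ_pi] at hx hy
  calc ∑ i, f i ((a • x + b • y) i) < ∑ i, (a • f i (x i) + b • f i (y i)) :=
        Finset.sum_lt_sum (fun i _ => (hf i).convexOn.2 (hx i) (hy i) ha.le hb.le hab)
          ⟨j, Finset.mem_univ j, (hf j).2 (hx j) (hy j) hj ha hb hab⟩
    _ = a • ∑ i, f i (x i) + b • ∑ i, f i (y i) := by
        rw [Finset.sum_add_distrib, Finset.smul_sum, Finset.smul_sum]

theorem tendsto_cocompact_pi_sum {ι : Type*} [Fintype ι] {X : ι → Type*}
    [∀ i, TopologicalSpace (X i)] {g : ∀ i, X i → ℝ} (hbdd : ∀ i, BddBelow (range (g i)))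
    (hg : ∀ i, Tendsto (g i) (cocompact (X i)) atTop) :
    Tendsto (fun x => ∑ i, g i (x i)) (cocompact (∀ i, X i)) atTop := by
  classical
  choose m hm using hbdd
  rw [← Filter.coprodᵢ_cocompact, Filter.coprodᵢ, tendsto_iSup]
  intro j
  refine tendsto_atTop_mono (fun x => ?_)
    (tendsto_atTop_add_const_right _ (∑ i ∈ Finset.univ.erase j, m i)
      ((hg j).comp tendsto_comap))
  rw [← Finset.add_sum_erase _ _ (Finset.mem_univ j)]
  exact add_le_add le_rfl (Finset.sum_le_sum fun i _ => hm i (mem_range_self _))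

theorem tendsto_cocompact_mul_exp_sub_mul {a b : ℝ} (ha : 0 < a) (hb : 0 < b) :
    Tendsto (fun s => a * exp s - b * s) (cocompact ℝ) atTop := by
  rw [cocompact_eq_atBot_atTop, tendsto_sup]
  constructor
  · refine tendsto_atTop_mono (fun s => ?_) (tendsto_neg_atBot_atTop.const_mul_atTop hb)
    have := exp_pos s
    nlinarith
  · have hlin : ∀ᶠ s in atTop, b * s ≤ a / 2 * exp s := by
      have := (isLittleO_pow_exp_atTop (n := 1)).bound (div_pos (half_pos ha) hb)
      filter_upwards [this, eventually_ge_atTop 0] with s hs hs0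
      rw [pow_one, norm_of_nonneg hs0, norm_of_nonneg (exp_pos s).le] at hs
      calc b * s ≤ b * (a / 2 / b * exp s) := by gcongr
        _ = a / 2 * exp s := by field_simp
    refine tendsto_atTop_mono' _ ?_ (tendsto_exp_atTop.const_mul_atTop (half_pos ha))
    filter_upwards [hlin] with s hs
    linarith

/-- The dual Eisenberg–Gale objective `ψ`. -/
noncomputable def dualObjective {Θ : Type*} [MeasurableSpace Θ] (μ : Measure Θ) (n : ℕ)
    (hn : 0 < n) (v : Fin n → Θ → ℝ) (B : Fin n → ℝ) (β : Fin n → ℝ) : ℝ :=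
  (∫ θ, maxFun n hn v β θ ∂μ) - ∑ i, B i * log (β i)

section DualObjective

variable {Θ : Type*} [MeasurableSpace Θ] {μ : Measure Θ} {n : ℕ} {hn : 0 < n}
  {v : Fin n → Θ → ℝ} {B : Fin n → ℝ}

theorem integrable_maxFun (hvint : ∀ i, Integrable (v i) μ) (β : Fin n → ℝ) :
    Integrable (maxFun n hn v β) μ :=
  Integrable.finset_sup' _ fun i _ => (hvint i).const_mul (β i)

theorem convexOn_integral_maxFun (hvint : ∀ i, Integrable (v i) μ) :
    ConvexOn ℝ univ (fun β => ∫ θ, maxFun n hn v β θ ∂μ) :=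
  integral_convexOn_of_integrand_ae convex_univ
    (ae_of_all _ fun θ => ConvexOn.finset_sup' _ convex_univ fun i _ =>
      ((LinearMap.proj (R := ℝ) (φ := fun _ : Fin n => ℝ) i).smulRight (v i θ)).convexOn
        convex_univ)
    fun β _ => integrable_maxFun hvint β

theorem continuous_integral_maxFun (hvint : ∀ i, Integrable (v i) μ) :
    Continuous (fun β => ∫ θ, maxFun n hn v β θ ∂μ) :=
  continuousOn_univ.mp ((convexOn_integral_maxFun hvint).continuousOn isOpen_univ)

theorem sum_mul_integral_le_card_mul_integral_maxFun [IsFiniteMeasure μ]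
    (hvint : ∀ i, Integrable (v i) μ) (β : Fin n → ℝ) :
    ∑ i, β i * ∫ θ, v i θ ∂μ ≤ n * ∫ θ, maxFun n hn v β θ ∂μ := by
  have hpt : ∀ θ, ∑ i, β i * v i θ ≤ n * maxFun n hn v β θ := fun θ => by
    simpa using Finset.sum_le_card_nsmul Finset.univ (fun i => β i * v i θ) _
      fun i hi => Finset.le_sup' (fun i => β i * v i θ) hi
  simp only [← integral_const_mul]
  rw [← integral_finsetSum _ fun i _ => (hvint i).const_mul (β i)]
  exact integral_mono (integrable_finsetSum _ fun i _ => (hvint i).const_mul (β i))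
    ((integrable_maxFun hvint β).const_mul _) hpt

theorem strictConvexOn_dualObjective (hvint : ∀ i, Integrable (v i) μ) (hB : ∀ i, 0 < B i) :
    StrictConvexOn ℝ (univ.pi fun _ => Ioi 0) (dualObjective μ n hn v B) := by
  have hlog : StrictConvexOn ℝ (univ.pi fun _ => Ioi 0)
      (fun β : Fin n → ℝ => ∑ i, B i * -log (β i)) :=
    strictConvexOn_univ_pi_sum fun i => strictConcaveOn_log_Ioi.neg.const_mul (hB i)
  have hint := (convexOn_integral_maxFun (hn := hn) hvint).subset (subset_univ _) hlog.1
  exact (hint.add_strictConvexOn hlog).congr fun β _ => by simp [dualObjective, sub_eq_add_neg]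

/- Substituting `β = exp x` turns the open orthant into all of `ℝⁿ`, where coercivity of `ψ` is
`Tendsto · (cocompact _) atTop` and the extreme value theorem applies. -/
theorem exists_isMinOn_dualObjective [IsFiniteMeasure μ] (hvint : ∀ i, Integrable (v i) μ)
    (hvpos : ∀ i, 0 < ∫ θ, v i θ ∂μ) (hB : ∀ i, 0 < B i) :
    ∃ βs ∈ univ.pi (fun _ => Ioi 0),
      IsMinOn (dualObjective μ n hn v B) (univ.pi fun _ => Ioi 0) βs := by
  have hnR : (0 : ℝ) < n := Nat.cast_pos.mpr hn
  set F : (Fin n → ℝ) → ℝ := fun x => dualObjective μ n hn v B fun i => exp (x i)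
  have hF : F = fun x => (∫ θ, maxFun n hn v (fun i => exp (x i)) θ ∂μ) - ∑ i, B i * x i := by
    simp [F, dualObjective]
  set G : Fin n → ℝ → ℝ := fun i s => (∫ θ, v i θ ∂μ) / n * exp s - B i * s
  have hG : ∀ i, Tendsto (G i) (cocompact ℝ) atTop := fun i =>
    tendsto_cocompact_mul_exp_sub_mul (div_pos (hvpos i) hnR) (hB i)
  have hGbdd : ∀ i, BddBelow (range (G i)) := fun i => by
    obtain ⟨s, hs⟩ := (by fun_prop : Continuous (G i)).exists_forall_le (hG i)
    exact ⟨G i s, forall_mem_range.mpr hs⟩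
  have hGF : ∀ x, ∑ i, G i (x i) ≤ F x := fun x => by
    have hsum := sum_mul_integral_le_card_mul_integral_maxFun (hn := hn) hvint fun i => exp (x i)
    rw [hF]
    simp only [G, Finset.sum_sub_distrib, ← Finset.sum_div, div_mul_eq_mul_div]
    refine sub_le_sub_right ?_ _
    rw [div_le_iff₀ hnR]
    simpa only [mul_comm] using hsum
  have hFcont : Continuous F := by
    rw [hF]
    exact ((continuous_integral_maxFun hvint).comp (by fun_prop)).sub (by fun_prop)
  obtain ⟨x, hx⟩ := hFcont.exists_forall_le
    (tendsto_atTop_mono hGF (tendsto_cocompact_pi_sum hGbdd hG))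
  refine ⟨fun i => exp (x i), fun i _ => exp_pos _, fun β hβ => ?_⟩
  simpa [F, exp_log (hβ _ (mem_univ _))] using hx fun i => log (β i)

end DualObjective

theorem stmt5_general {Θ : Type*} [MeasurableSpace Θ] (μ : Measure Θ) [IsFiniteMeasure μ]
    (n : ℕ) (hn : 0 < n) (v : Fin n → Θ → ℝ)
    (hvint : ∀ i, Integrable (v i) μ)
    (hvpos : ∀ i, 0 < ∫ θ, v i θ ∂μ)
    (B : Fin n → ℝ) (hB : ∀ i, 0 < B i) :
    ∃! βs : Fin n → ℝ, (∀ i, 0 < βs i) ∧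
      ∀ β : Fin n → ℝ, (∀ i, 0 < β i) →
        (∫ θ, maxFun n hn v βs θ ∂μ) - (∑ i, B i * Real.log (βs i)) ≤
          (∫ θ, maxFun n hn v β θ ∂μ) - (∑ i, B i * Real.log (β i)) := by
  obtain ⟨βs, hβs, hmin⟩ := exists_isMinOn_dualObjective (hn := hn) hvint hvpos hB
  simp only [mem_univ_pi, mem_Ioi] at hβs
  refine ⟨βs, ⟨hβs, fun β hβ => hmin (mem_univ_pi.mpr hβ)⟩, fun β ⟨hβ, hβmin⟩ => ?_⟩
  exact (strictConvexOn_dualObjective hvint hB).eq_of_isMinOn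
    (fun γ hγ => hβmin γ (by simpa using hγ)) hmin (mem_univ_pi.mpr hβ) (mem_univ_pi.mpr hβs)

theorem stmt5 {Θ : Type*} [MeasurableSpace Θ] (μ : Measure Θ) [IsFiniteMeasure μ]
    (n : ℕ) (hn : 0 < n) (v : Fin n → Θ → ℝ)
    (hvint : ∀ i, Integrable (v i) μ)
    (hvnn : ∀ i, ∀ᵐ θ ∂μ, 0 ≤ v i θ)
    (hvpos : ∀ i, 0 < ∫ θ, v i θ ∂μ)
    (B : Fin n → ℝ) (hB : ∀ i, 0 < B i) :
    ∃! βs : Fin n → ℝ, (∀ i, 0 < βs i) ∧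
      ∀ β : Fin n → ℝ, (∀ i, 0 < β i) →
        (∫ θ, maxFun n hn v βs θ ∂μ) - (∑ i, B i * Real.log (βs i)) ≤
          (∫ θ, maxFun n hn v β θ ∂μ) - (∑ i, B i * Real.log (β i)) :=
  stmt5_general μ n hn v hvint hvpos B hB
end

section
/- Every market equilibrium allocation is Pareto optimal: if (x*, p*) is a market equilibrium, there is no feasible allocation x̃ (x̃ᵢ ∈ L^∞(Θ)₊, Σᵢ x̃ᵢ ≤ 1 a.e.) with ⟨vᵢ, x̃ᵢ⟩ ≥ ⟨vᵢ, x*ᵢ⟩ for all i and strict inequality for some i. -/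
/-!
A Pareto improvement `y` on the equilibrium allocation `x` is unaffordable in total. Each buyer
must pay at least her budget for `y i`: a strictly cheaper bundle could be scaled up by some
`t > 1` within budget, and since utility is linear and positive at `x i` the scaled bundle would
beat her optimal bundle. The buyer who strictly gains must pay strictly more than her budget.
Summing, `∑ i, ∫ p * y i > ∑ i, B i ≥ ∑ i, ∫ p * x i = ∫ p`, whereas `∑ i, y i ≤ 1` and `p ≥ 0`
give `∑ i, ∫ p * y i ≤ ∫ p`.
-/

open MeasureTheory

lemma exists_one_lt_mul_le {c B : ℝ} (hcB : c < B) : ∃ t : ℝ, 1 < t ∧ t * c ≤ B := by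
  rcases le_or_gt c 0 with hc | hc
  · exact ⟨2, one_lt_two, by linarith⟩
  · exact ⟨B / c, (one_lt_div hc).mpr hcB, (div_mul_cancel₀ B hc.ne').le⟩

section FisherMarket

variable {Θ : Type*} [MeasurableSpace Θ] {μ : Measure Θ}

def IsOptimalBundle (μ : Measure Θ) (p v : Θ → ℝ) (B : ℝ) (x : Θ → ℝ) : Prop :=
  ∀ y : Θ → ℝ, MemLp y ⊤ μ → (∀ᵐ θ ∂μ, 0 ≤ y θ) →
    (∫ θ, p θ * y θ ∂μ) ≤ B → (∫ θ, v θ * y θ ∂μ) ≤ ∫ θ, v θ * x θ ∂μ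

lemma IsOptimalBundle.budget_lt_cost {p v x y : Θ → ℝ} {B : ℝ}
    (hx : IsOptimalBundle μ p v B x) (hy : MemLp y ⊤ μ) (hynn : ∀ᵐ θ ∂μ, 0 ≤ y θ)
    (hxy : (∫ θ, v θ * x θ ∂μ) < ∫ θ, v θ * y θ ∂μ) : B < ∫ θ, p θ * y θ ∂μ :=
  lt_of_not_ge fun hcost => (hx y hy hynn hcost).not_gt hxy

lemma IsOptimalBundle.budget_le_cost {p v x y : Θ → ℝ} {B : ℝ}
    (hx : IsOptimalBundle μ p v B x) (hupos : 0 < ∫ θ, v θ * x θ ∂μ)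
    (hy : MemLp y ⊤ μ) (hynn : ∀ᵐ θ ∂μ, 0 ≤ y θ)
    (hxy : (∫ θ, v θ * x θ ∂μ) ≤ ∫ θ, v θ * y θ ∂μ) : B ≤ ∫ θ, p θ * y θ ∂μ := by
  by_contra! hcost
  obtain ⟨t, ht, htc⟩ := exists_one_lt_mul_le hcost
  have hscale : ∀ w : Θ → ℝ, (∫ θ, w θ * (t * y θ) ∂μ) = t * ∫ θ, w θ * y θ ∂μ := fun w => by
    rw [← integral_const_mul]
    congr 1 with θ
    ring
  have hty := hx (fun θ => t * y θ) (hy.const_mul t)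
    (by filter_upwards [hynn] with θ h using mul_nonneg (by linarith) h)
    (by rwa [hscale])
  rw [hscale] at hty
  nlinarith

variable {ι : Type*} {p : Θ → ℝ}

lemma sum_integral_mul_le_integral (s : Finset ι) {y : ι → Θ → ℝ} (hp : Integrable p μ)
    (hpnn : ∀ᵐ θ ∂μ, 0 ≤ p θ) (hy : ∀ i ∈ s, MemLp (y i) ⊤ μ)
    (hsupply : ∀ᵐ θ ∂μ, ∑ i ∈ s, y i θ ≤ 1) :
    ∑ i ∈ s, ∫ θ, p θ * y i θ ∂μ ≤ ∫ θ, p θ ∂μ := by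
  have hpy : ∀ i ∈ s, Integrable (fun θ => p θ * y i θ) μ := fun i hi =>
    hp.mul_of_top_left (hy i hi)
  rw [← integral_finsetSum s hpy]
  refine integral_mono_ae (integrable_finsetSum s hpy) hp ?_
  filter_upwards [hpnn, hsupply] with θ hpθ hyθ
  rw [← Finset.mul_sum]
  exact mul_le_of_le_one_right hpθ hyθ

lemma integral_eq_sum_integral_mul_of_clear (s : Finset ι) {x : ι → Θ → ℝ}
    (hp : Integrable p μ) (hx : ∀ i ∈ s, MemLp (x i) ⊤ μ)
    (hclear : (∫ θ, p θ * (1 - ∑ i ∈ s, x i θ) ∂μ) = 0) :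
    ∫ θ, p θ ∂μ = ∑ i ∈ s, ∫ θ, p θ * x i θ ∂μ := by
  have hpx : ∀ i ∈ s, Integrable (fun θ => p θ * x i θ) μ := fun i hi =>
    hp.mul_of_top_left (hx i hi)
  simp_rw [mul_sub, mul_one, Finset.mul_sum] at hclear
  rw [integral_sub hp (integrable_finsetSum s hpx), integral_finsetSum s hpx] at hclear
  linarith

end FisherMarket

theorem stmt9_general {Θ : Type*} [MeasurableSpace Θ] (μ : Measure Θ)
    (n : ℕ) (B : Fin n → ℝ)
    (v : Fin n → Θ → ℝ)
    (x : Fin n → Θ → ℝ) (p : Θ → ℝ)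
    (hx : ∀ i, MemLp (x i) ⊤ μ)
    (hp : Integrable p μ) (hpnn : ∀ᵐ θ ∂μ, 0 ≤ p θ)
    -- buyer optimality
    (hfeas : ∀ i, (∫ θ, p θ * x i θ ∂μ) ≤ B i)
    (hopt : ∀ i, ∀ y : Θ → ℝ, MemLp y ⊤ μ → (∀ᵐ θ ∂μ, 0 ≤ y θ) →
      (∫ θ, p θ * y θ ∂μ) ≤ B i →
      (∫ θ, v i θ * y θ ∂μ) ≤ ∫ θ, v i θ * x i θ ∂μ)
    -- market clearance
    (hclear : (∫ θ, p θ * (1 - ∑ i, x i θ) ∂μ) = 0)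
    -- positive equilibrium utilities
    (hupos : ∀ i, 0 < ∫ θ, v i θ * x i θ ∂μ) :
    ¬ ∃ y : Fin n → Θ → ℝ,
      (∀ i, MemLp (y i) ⊤ μ) ∧ (∀ i, ∀ᵐ θ ∂μ, 0 ≤ y i θ) ∧
      (∀ᵐ θ ∂μ, ∑ i, y i θ ≤ 1) ∧
      (∀ i, (∫ θ, v i θ * x i θ ∂μ) ≤ ∫ θ, v i θ * y i θ ∂μ) ∧
      (∃ i, (∫ θ, v i θ * x i θ ∂μ) < ∫ θ, v i θ * y i θ ∂μ) := by
  rintro ⟨y, hy, hynn, hysupply, hyge, i₀, hi₀⟩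
  have hopt' : ∀ i, IsOptimalBundle μ p (v i) (B i) (x i) := hopt
  have hcost : ∑ i, B i < ∑ i, ∫ θ, p θ * y i θ ∂μ :=
    Finset.sum_lt_sum (fun i _ => (hopt' i).budget_le_cost (hupos i) (hy i) (hynn i) (hyge i))
      ⟨i₀, Finset.mem_univ _, (hopt' i₀).budget_lt_cost (hy i₀) (hynn i₀) hi₀⟩
  have hspent : ∫ θ, p θ ∂μ ≤ ∑ i, B i := by
    rw [integral_eq_sum_integral_mul_of_clear _ hp (fun i _ => hx i) hclear]
    exact Finset.sum_le_sum fun i _ => hfeas i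
  have hy_cost := sum_integral_mul_le_integral Finset.univ hp hpnn (fun i _ => hy i) hysupply
  linarith

theorem stmt9 {Θ : Type*} [MeasurableSpace Θ] (μ : Measure Θ) [IsFiniteMeasure μ]
    (n : ℕ) (B : Fin n → ℝ) (hB : ∀ i, 0 < B i)
    (v : Fin n → Θ → ℝ) (hvint : ∀ i, Integrable (v i) μ)
    (hvnn : ∀ i, ∀ᵐ θ ∂μ, 0 ≤ v i θ)
    (x : Fin n → Θ → ℝ) (p : Θ → ℝ)
    (hx : ∀ i, MemLp (x i) ⊤ μ) (hxnn : ∀ i, ∀ᵐ θ ∂μ, 0 ≤ x i θ)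
    (hp : Integrable p μ) (hpnn : ∀ᵐ θ ∂μ, 0 ≤ p θ)
    -- buyer optimality
    (hfeas : ∀ i, (∫ θ, p θ * x i θ ∂μ) ≤ B i)
    (hopt : ∀ i, ∀ y : Θ → ℝ, MemLp y ⊤ μ → (∀ᵐ θ ∂μ, 0 ≤ y θ) →
      (∫ θ, p θ * y θ ∂μ) ≤ B i →
      (∫ θ, v i θ * y θ ∂μ) ≤ ∫ θ, v i θ * x i θ ∂μ)
    -- market clearance
    (hsupply : ∀ᵐ θ ∂μ, ∑ i, x i θ ≤ 1)
    (hclear : (∫ θ, p θ * (1 - ∑ i, x i θ) ∂μ) = 0)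
    -- positive equilibrium utilities
    (hupos : ∀ i, 0 < ∫ θ, v i θ * x i θ ∂μ) :
    ¬ ∃ y : Fin n → Θ → ℝ,
      (∀ i, MemLp (y i) ⊤ μ) ∧ (∀ i, ∀ᵐ θ ∂μ, 0 ≤ y i θ) ∧
      (∀ᵐ θ ∂μ, ∑ i, y i θ ≤ 1) ∧
      (∀ i, (∫ θ, v i θ * x i θ ∂μ) ≤ ∫ θ, v i θ * y i θ ∂μ) ∧
      (∃ i, (∫ θ, v i θ * x i θ ∂μ) < ∫ θ, v i θ * y i θ ∂μ) :=
  stmt9_general μ n B v x p hx hp hpnn hfeas hopt hclear hupos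
end

section
/- For n = 2 buyers with normalized nonnegative linear valuations vᵢ(θ) = cᵢθ + dᵢ on [0,1] (cᵢ/2 + dᵢ = 1, d₁ ≥ d₂), a utility vector (u₁, u₂) with u₁, u₂ ≥ 0 is feasible (achievable by a nonnegative allocation x₁ + x₂ ≤ 1 a.e.) if and only if there exists a ∈ [0,1] with u₁ ≤ (c₁/2)a² + d₁a and u₂ ≤ (c₂/2)(1 − a²) + d₂(1 − a). -/
/-!
For the "if" direction, give buyer 1 a fraction of `[0, a]` and buyer 2 a fraction of `(a, 1]`.

For "only if", choose `a` with `∫_a^1 v₂ = u₂` by the intermediate value theorem. Since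
`d₁ ≥ d₂`, the ratio `v₁ / v₂` is decreasing, so among all `0 ≤ x₂ ≤ 1` giving buyer 2 the value
`u₂`, the cut `1_{(a,1]}` gives the least `∫ v₁ x₂` (a bathtub argument); hence
`u₁ ≤ ∫ v₁ (1 - x₂) ≤ ∫_0^a v₁`. The argument needs `v₂(a) > 0`; otherwise `a = 1`, which is
trivial, or `a = 0` and `v₂ = 2θ`, where `x₂ = 1` almost everywhere.
-/

open MeasureTheory Set

theorem integral_affine (c d a b : ℝ) :
    ∫ θ in a..b, (c * θ + d) = c / 2 * (b ^ 2 - a ^ 2) + d * (b - a) := by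
  rw [intervalIntegral.integral_add (intervalIntegral.intervalIntegrable_id.const_mul c)
    intervalIntegrable_const, intervalIntegral.integral_const_mul, integral_id,
    intervalIntegral.integral_const, smul_eq_mul]
  ring

theorem integral_mul_indicator_one {α : Type*} [MeasurableSpace α] {μ : Measure α} {s : Set α}
    (hs : MeasurableSet s) (f : α → ℝ) :
    ∫ θ, f θ * s.indicator 1 θ ∂μ = ∫ θ in s, f θ ∂μ := by
  have hf : ∀ θ, f θ * s.indicator 1 θ = s.indicator f θ := fun θ => by
    by_cases h : θ ∈ s <;> simp [h]
  simp only [hf, integral_indicator hs]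

theorem integrable_affine_mul {c d p q : ℝ} {x : ℝ → ℝ} (hx : Measurable x)
    (hx01 : ∀ᵐ θ ∂volume.restrict (Icc p q), 0 ≤ x θ ∧ x θ ≤ 1) :
    Integrable (fun θ => (c * θ + d) * x θ) (volume.restrict (Icc p q)) :=
  Integrable.mul_bdd (by fun_prop : Continuous fun θ : ℝ => c * θ + d).integrableOn_Icc
    hx.aestronglyMeasurable (c := 1) <| hx01.mono fun θ hθ => by
      rw [Real.norm_eq_abs, abs_le]; constructor <;> linarith [hθ.1, hθ.2]

theorem integrable_affine_mul_indicator {c d p q : ℝ} {s : Set ℝ} (hs : MeasurableSet s) :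
    Integrable (fun θ => (c * θ + d) * s.indicator 1 θ) (volume.restrict (Icc p q)) :=
  integrable_affine_mul (measurable_one.indicator hs) <| ae_of_all _ fun θ => by
    by_cases h : θ ∈ s <;> simp [h]

section Cuts

variable {c d a : ℝ}

theorem integral_affine_mul_indicator_Iic (ha : a ∈ Icc (0:ℝ) 1) :
    ∫ θ in Icc (0:ℝ) 1, (c * θ + d) * (Iic a).indicator 1 θ = c / 2 * a ^ 2 + d * a := by
  have hcut : Iic a ∩ Icc (0:ℝ) 1 = Icc 0 a := by
    ext θ
    exact ⟨fun h => ⟨h.2.1, h.1⟩, fun h => ⟨h.2, h.1, h.2.trans ha.2⟩⟩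
  rw [integral_mul_indicator_one measurableSet_Iic, Measure.restrict_restrict measurableSet_Iic,
    hcut, integral_Icc_eq_integral_Ioc, ← intervalIntegral.integral_of_le ha.1, integral_affine]
  ring

theorem integral_affine_mul_indicator_Ioi (ha : a ∈ Icc (0:ℝ) 1) :
    ∫ θ in Icc (0:ℝ) 1, (c * θ + d) * (Ioi a).indicator 1 θ =
      c / 2 * (1 - a ^ 2) + d * (1 - a) := by
  have hcut : Ioi a ∩ Icc (0:ℝ) 1 = Ioc a 1 := by
    ext θ
    exact ⟨fun h => ⟨h.1, h.2.2⟩, fun h => ⟨h.1, ha.1.trans h.1.le, h.2⟩⟩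
  rw [integral_mul_indicator_one measurableSet_Ioi, Measure.restrict_restrict measurableSet_Ioi,
    hcut, ← intervalIntegral.integral_of_le ha.2, integral_affine]
  ring

end Cuts

theorem integral_affine_mul_mem_Icc {c d : ℝ} {x : ℝ → ℝ}
    (hv : ∀ θ ∈ Icc (0:ℝ) 1, 0 ≤ c * θ + d) (hx : Measurable x)
    (hx01 : ∀ᵐ θ ∂volume.restrict (Icc (0:ℝ) 1), 0 ≤ x θ ∧ x θ ≤ 1) :
    ∫ θ in Icc (0:ℝ) 1, (c * θ + d) * x θ ∈ Icc 0 (c / 2 + d) := by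
  have hmem : ∀ᵐ θ ∂volume.restrict (Icc (0:ℝ) 1), θ ∈ Icc (0:ℝ) 1 :=
    ae_restrict_mem measurableSet_Icc
  constructor
  · refine integral_nonneg_of_ae ?_
    filter_upwards [hx01, hmem] with θ hxθ hθ using mul_nonneg (hv θ hθ) hxθ.1
  · have hle := integral_mono_ae (integrable_affine_mul (c := c) (d := d) hx hx01)
      (by fun_prop : Continuous fun θ : ℝ => c * θ + d).integrableOn_Icc
      (by filter_upwards [hx01, hmem] with θ hxθ hθ
          using mul_le_of_le_one_right (hv θ hθ) hxθ.2)
    refine hle.trans_eq ?_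
    rw [integral_Icc_eq_integral_Ioc, ← intervalIntegral.integral_of_le zero_le_one,
      integral_affine]
    ring

theorem affine_cross_mul_le {c₁ d₁ c₂ d₂ s t : ℝ} (hcd : c₁ * d₂ ≤ c₂ * d₁) (hst : s ≤ t) :
    (c₁ * t + d₁) * (c₂ * s + d₂) ≤ (c₁ * s + d₁) * (c₂ * t + d₂) := by
  nlinarith [mul_nonneg (sub_nonneg.2 hcd) (sub_nonneg.2 hst)]

theorem integral_affine_mul_indicator_Ioi_le {c₁ d₁ c₂ d₂ a : ℝ} {x : ℝ → ℝ}
    (hcd : c₁ * d₂ ≤ c₂ * d₁) (hva : 0 < c₂ * a + d₂) (hx : Measurable x)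
    (hx01 : ∀ᵐ θ ∂volume.restrict (Icc (0:ℝ) 1), 0 ≤ x θ ∧ x θ ≤ 1)
    (heq : ∫ θ in Icc (0:ℝ) 1, (c₂ * θ + d₂) * x θ =
      ∫ θ in Icc (0:ℝ) 1, (c₂ * θ + d₂) * (Ioi a).indicator 1 θ) :
    ∫ θ in Icc (0:ℝ) 1, (c₁ * θ + d₁) * (Ioi a).indicator 1 θ ≤
      ∫ θ in Icc (0:ℝ) 1, (c₁ * θ + d₁) * x θ := by
  have hx_int (c d : ℝ) := integrable_affine_mul (c := c) (d := d) hx hx01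
  have hind_int (c d : ℝ) := integrable_affine_mul_indicator (c := c) (d := d) (p := 0) (q := 1)
    (measurableSet_Ioi (a := a))
  -- `v₂(a) v₁ - v₁(a) v₂` and `1_{(a,∞)} - x` change sign at `a` in opposite directions
  have hpt : ∀ᵐ θ ∂volume.restrict (Icc (0:ℝ) 1),
      (c₂ * a + d₂) * ((c₁ * θ + d₁) * (Ioi a).indicator 1 θ - (c₁ * θ + d₁) * x θ) ≤
        (c₁ * a + d₁) * ((c₂ * θ + d₂) * (Ioi a).indicator 1 θ - (c₂ * θ + d₂) * x θ) := by
    filter_upwards [hx01] with θ ⟨hx0, hx1⟩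
    by_cases h : a < θ
    · have hcross := affine_cross_mul_le hcd h.le
      simp only [indicator_of_mem (show θ ∈ Ioi a from h), Pi.one_apply]
      nlinarith
    · have hcross := affine_cross_mul_le hcd (not_lt.1 h)
      simp only [indicator_of_notMem (show θ ∉ Ioi a from h)]
      nlinarith
  have hmono := integral_mono_ae (((hind_int c₁ d₁).sub (hx_int c₁ d₁)).const_mul _)
    (((hind_int c₂ d₂).sub (hx_int c₂ d₂)).const_mul _) hpt
  rw [integral_const_mul, integral_const_mul, integral_sub' (hind_int c₁ d₁) (hx_int c₁ d₁),
    integral_sub' (hind_int c₂ d₂) (hx_int c₂ d₂), heq, sub_self, mul_zero] at hmono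
  exact sub_nonpos.1 (nonpos_of_mul_nonpos_right hmono hva)

theorem ae_eq_of_integral_mul_eq {α : Type*} [MeasurableSpace α] {μ : Measure α} {v x y : α → ℝ}
    (hv : ∀ᵐ θ ∂μ, 0 < v θ) (hxy : ∀ᵐ θ ∂μ, x θ ≤ y θ)
    (hx : Integrable (fun θ => v θ * x θ) μ) (hy : Integrable (fun θ => v θ * y θ) μ)
    (h : ∫ θ, v θ * x θ ∂μ = ∫ θ, v θ * y θ ∂μ) : x =ᵐ[μ] y := by
  have hnn : 0 ≤ᵐ[μ] (fun θ => v θ * y θ) - fun θ => v θ * x θ := by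
    filter_upwards [hv, hxy] with θ hvθ hθ
    simpa using mul_le_mul_of_nonneg_left hθ hvθ.le
  have hzero := (integral_eq_zero_iff_of_nonneg_ae hnn (hy.sub hx)).1
    (by rw [integral_sub' hy hx, h, sub_self])
  filter_upwards [hzero, hv] with θ hθ hvθ
  exact mul_left_cancel₀ hvθ.ne' (sub_eq_zero.1 hθ).symm

theorem integral_affine_mul_indicator_Ioi_zero_le {c₁ d₁ c₂ d₂ : ℝ} {x : ℝ → ℝ}
    (hv₂ : ∀ θ ∈ Ioc (0:ℝ) 1, 0 < c₂ * θ + d₂) (hx : Measurable x)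
    (hx01 : ∀ᵐ θ ∂volume.restrict (Icc (0:ℝ) 1), 0 ≤ x θ ∧ x θ ≤ 1)
    (heq : ∫ θ in Icc (0:ℝ) 1, (c₂ * θ + d₂) * x θ =
      ∫ θ in Icc (0:ℝ) 1, (c₂ * θ + d₂) * (Ioi 0).indicator 1 θ) :
    ∫ θ in Icc (0:ℝ) 1, (c₁ * θ + d₁) * (Ioi 0).indicator 1 θ ≤
      ∫ θ in Icc (0:ℝ) 1, (c₁ * θ + d₁) * x θ := by
  have hIoc : ∀ᵐ θ ∂volume.restrict (Icc (0:ℝ) 1), θ ∈ Ioc (0:ℝ) 1 := by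
    rw [← Measure.restrict_congr_set Ioc_ae_eq_Icc]
    exact ae_restrict_mem measurableSet_Ioc
  have hx_eq : x =ᵐ[volume.restrict (Icc (0:ℝ) 1)] (Ioi 0).indicator 1 := by
    refine ae_eq_of_integral_mul_eq (hIoc.mono hv₂) ?_ (integrable_affine_mul hx hx01)
      (integrable_affine_mul_indicator measurableSet_Ioi) heq
    filter_upwards [hIoc, hx01] with θ hθ hxθ
    simpa [hθ.1] using hxθ.2
  exact (integral_congr_ae (hx_eq.mono fun θ h => by simp only [h])).ge

theorem affine_pos_or_eq_one_or_eq_zero {c d a : ℝ}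
    (hv : ∀ θ ∈ Icc (0:ℝ) 1, 0 ≤ c * θ + d) (hn : c / 2 + d = 1) (ha : a ∈ Icc (0:ℝ) 1) :
    0 < c * a + d ∨ a = 1 ∨ (a = 0 ∧ d = 0) := by
  have hv₀ : 0 ≤ d := by simpa using hv 0 ⟨le_rfl, zero_le_one⟩
  have hv₁ : 0 ≤ c + d := by simpa using hv 1 ⟨zero_le_one, le_rfl⟩
  rcases ha.1.eq_or_lt with rfl | ha₀
  · rcases hv₀.eq_or_lt with hd | hd
    · exact Or.inr (Or.inr ⟨rfl, hd.symm⟩)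
    · exact Or.inl (by simpa using hd)
  rcases ha.2.eq_or_lt with rfl | ha₁
  · exact Or.inr (Or.inl rfl)
  -- `v a = (1 - a)² v 0 + a² v 1 + a (1 - a) (v 0 + v 1)` and `v 0 + v 1 = 2`
  obtain rfl : c = 2 - 2 * d := by linarith
  refine Or.inl ?_
  nlinarith [mul_pos ha₀ (sub_pos.2 ha₁), mul_nonneg (sq_nonneg (1 - a)) hv₀,
    mul_nonneg (sq_nonneg a) hv₁]

theorem exists_cut_of_feasible {c₁ d₁ c₂ d₂ : ℝ} {x₁ x₂ : ℝ → ℝ}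
    (h1 : ∀ θ ∈ Icc (0:ℝ) 1, 0 ≤ c₁ * θ + d₁) (h2 : ∀ θ ∈ Icc (0:ℝ) 1, 0 ≤ c₂ * θ + d₂)
    (hn1 : c₁ / 2 + d₁ = 1) (hn2 : c₂ / 2 + d₂ = 1) (hd : d₂ ≤ d₁)
    (hm₁ : Measurable x₁) (hm₂ : Measurable x₂)
    (hx : ∀ᵐ θ ∂volume.restrict (Icc (0:ℝ) 1), 0 ≤ x₁ θ ∧ 0 ≤ x₂ θ ∧ x₁ θ + x₂ θ ≤ 1) :
    ∃ a ∈ Icc (0:ℝ) 1,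
      ∫ θ in Icc (0:ℝ) 1, (c₁ * θ + d₁) * x₁ θ ≤ c₁ / 2 * a ^ 2 + d₁ * a ∧
      ∫ θ in Icc (0:ℝ) 1, (c₂ * θ + d₂) * x₂ θ ≤ c₂ / 2 * (1 - a ^ 2) + d₂ * (1 - a) := by
  have hx₁ : ∀ᵐ θ ∂volume.restrict (Icc (0:ℝ) 1), 0 ≤ x₁ θ ∧ x₁ θ ≤ 1 :=
    hx.mono fun θ h => ⟨h.1, by linarith [h.2.1, h.2.2]⟩
  have hx₂ : ∀ᵐ θ ∂volume.restrict (Icc (0:ℝ) 1), 0 ≤ x₂ θ ∧ x₂ θ ≤ 1 :=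
    hx.mono fun θ h => ⟨h.2.1, by linarith [h.1, h.2.2]⟩
  have hx₁₂ : ∀ᵐ θ ∂volume.restrict (Icc (0:ℝ) 1), 0 ≤ x₁ θ + x₂ θ ∧ x₁ θ + x₂ θ ≤ 1 :=
    hx.mono fun θ h => ⟨add_nonneg h.1 h.2.1, h.2.2⟩
  have hv₂x₂ := integral_affine_mul_mem_Icc h2 hm₂ hx₂
  have hsum : (∫ θ in Icc (0:ℝ) 1, (c₁ * θ + d₁) * x₁ θ) +
      ∫ θ in Icc (0:ℝ) 1, (c₁ * θ + d₁) * x₂ θ ≤ c₁ / 2 + d₁ := by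
    rw [← integral_add (integrable_affine_mul hm₁ hx₁) (integrable_affine_mul hm₂ hx₂)]
    simpa only [Pi.add_apply, mul_add] using
      (integral_affine_mul_mem_Icc h1 (hm₁.add hm₂) hx₁₂).2
  obtain ⟨a, ha, hGa⟩ : ∃ a ∈ Icc (0:ℝ) 1, c₂ / 2 * (1 - a ^ 2) + d₂ * (1 - a) =
      ∫ θ in Icc (0:ℝ) 1, (c₂ * θ + d₂) * x₂ θ :=
    intermediate_value_Icc' zero_le_one (by fun_prop) (by simpa using hv₂x₂)
  refine ⟨a, ha, ?_, hGa.ge⟩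
  have key : ∫ θ in Icc (0:ℝ) 1, (c₁ * θ + d₁) * (Ioi a).indicator 1 θ ≤
      ∫ θ in Icc (0:ℝ) 1, (c₁ * θ + d₁) * x₂ θ := by
    rcases affine_pos_or_eq_one_or_eq_zero h2 hn2 ha with hpos | rfl | ⟨rfl, rfl⟩
    · refine integral_affine_mul_indicator_Ioi_le
        (by linear_combination 2 * hd + 2 * d₂ * hn1 - 2 * d₁ * hn2) hpos hm₂ hx₂ ?_
      rw [integral_affine_mul_indicator_Ioi ha, hGa]
    · rw [integral_affine_mul_indicator_Ioi ha]
      simpa using (integral_affine_mul_mem_Icc h1 hm₂ hx₂).1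
    · refine integral_affine_mul_indicator_Ioi_zero_le (c₂ := c₂) (d₂ := 0)
        (fun θ hθ => by nlinarith [hθ.1]) hm₂ hx₂ ?_
      rw [integral_affine_mul_indicator_Ioi ha, hGa]
  rw [integral_affine_mul_indicator_Ioi ha] at key
  linarith

theorem exists_mul_eq_of_le {u F : ℝ} (hu : 0 ≤ u) (huF : u ≤ F) :
    ∃ t ∈ Icc (0:ℝ) 1, t * F = u := by
  rcases (hu.trans huF).eq_or_lt with rfl | hF
  · exact ⟨0, ⟨le_rfl, zero_le_one⟩, by linarith⟩
  · exact ⟨u / F, ⟨div_nonneg hu hF.le, div_le_one_of_le₀ huF hF.le⟩, div_mul_cancel₀ u hF.ne'⟩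

theorem feasible_of_cut {c₁ d₁ c₂ d₂ u₁ u₂ a : ℝ} (ha : a ∈ Icc (0:ℝ) 1)
    (hu₁ : 0 ≤ u₁) (hu₂ : 0 ≤ u₂) (hle₁ : u₁ ≤ c₁ / 2 * a ^ 2 + d₁ * a)
    (hle₂ : u₂ ≤ c₂ / 2 * (1 - a ^ 2) + d₂ * (1 - a)) :
    ∃ x₁ x₂ : ℝ → ℝ, Measurable x₁ ∧ Measurable x₂ ∧
      (∀ᵐ θ ∂volume.restrict (Icc (0:ℝ) 1), 0 ≤ x₁ θ ∧ 0 ≤ x₂ θ ∧ x₁ θ + x₂ θ ≤ 1) ∧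
      u₁ = ∫ θ in Icc (0:ℝ) 1, (c₁ * θ + d₁) * x₁ θ ∧
      u₂ = ∫ θ in Icc (0:ℝ) 1, (c₂ * θ + d₂) * x₂ θ := by
  obtain ⟨t₁, ht₁, rfl⟩ := exists_mul_eq_of_le hu₁ hle₁
  obtain ⟨t₂, ht₂, rfl⟩ := exists_mul_eq_of_le hu₂ hle₂
  refine ⟨fun θ => t₁ * (Iic a).indicator 1 θ, fun θ => t₂ * (Ioi a).indicator 1 θ,
    (measurable_one.indicator measurableSet_Iic).const_mul t₁,
    (measurable_one.indicator measurableSet_Ioi).const_mul t₂, ae_of_all _ fun θ => ?_, ?_, ?_⟩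
  · by_cases h : θ ≤ a
    · simp [h, ht₁.1, ht₁.2]
    · simp [h, not_le.1 h, ht₂.1, ht₂.2]
  · simp_rw [mul_left_comm _ t₁, integral_const_mul, integral_affine_mul_indicator_Iic ha]
  · simp_rw [mul_left_comm _ t₂, integral_const_mul, integral_affine_mul_indicator_Ioi ha]

theorem stmt14 (c₁ c₂ d₁ d₂ : ℝ)
    (h1 : ∀ θ ∈ Set.Icc (0:ℝ) 1, 0 ≤ c₁ * θ + d₁)
    (h2 : ∀ θ ∈ Set.Icc (0:ℝ) 1, 0 ≤ c₂ * θ + d₂)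
    (hn1 : c₁ / 2 + d₁ = 1) (hn2 : c₂ / 2 + d₂ = 1)
    (hd : d₂ ≤ d₁)
    (u₁ u₂ : ℝ) (hu₁ : 0 ≤ u₁) (hu₂ : 0 ≤ u₂) :
    (∃ x₁ x₂ : ℝ → ℝ, Measurable x₁ ∧ Measurable x₂ ∧
      (∀ᵐ θ ∂(volume.restrict (Set.Icc (0:ℝ) 1)),
        0 ≤ x₁ θ ∧ 0 ≤ x₂ θ ∧ x₁ θ + x₂ θ ≤ 1) ∧
      u₁ = (∫ θ in Set.Icc (0:ℝ) 1, (c₁ * θ + d₁) * x₁ θ) ∧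
      u₂ = (∫ θ in Set.Icc (0:ℝ) 1, (c₂ * θ + d₂) * x₂ θ)) ↔
    (∃ a ∈ Set.Icc (0:ℝ) 1,
      u₁ ≤ c₁ / 2 * a ^ 2 + d₁ * a ∧
      u₂ ≤ c₂ / 2 * (1 - a ^ 2) + d₂ * (1 - a)) := by
  constructor
  · rintro ⟨x₁, x₂, hm₁, hm₂, hx, rfl, rfl⟩
    exact exists_cut_of_feasible h1 h2 hn1 hn2 hd hm₁ hm₂ hx
  · rintro ⟨a, ha, hle₁, hle₂⟩
    exact feasible_of_cut ha hu₁ hu₂ hle₁ hle₂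
end
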